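/- For every real number x ≥ 1, ∑_{n ≤ x} (λ_3 ⋆ 𝟏)(n) = ⌊x^{1/3}⌋. -/

import Mathlib

/-
Both `λ₃` and `𝟏` are multiplicative, hence so is `λ₃ ⋆ 𝟏`. At a prime power,
`(λ₃ ⋆ 𝟏)(p^k) = ∑_{j ≤ k} ((j+1)/3)`, and the symbols `(1/3), (2/3), (3/3) = 1, -1, 0` sum to
zero over each period, so this is `1` if `3 ∣ k` and `0` otherwise. Thus `λ₃ ⋆ 𝟏` is the
indicator function of the cubes, and there are `⌊x^{1/3}⌋` positive cubes up to `x`.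
-/

instance : Fact (Nat.Prime 3) := ⟨by norm_num⟩

/-- `λ_3(n) = (τ(n)/3)` as a real number. -/
noncomputable def lam3 (n : ℕ) : ℝ :=
  (legendreSym 3 (n.divisors.card : ℤ) : ℝ)

open Finset ArithmeticFunction
open scoped ArithmeticFunction.zeta ArithmeticFunction.sigma

theorem Nat.exists_pow_eq_iff_forall_dvd_factorization {n : ℕ} (hn : n ≠ 0) (k : ℕ) :
    (∃ m, m ^ k = n) ↔ ∀ p, k ∣ n.factorization p := by
  constructor
  · rintro ⟨m, rfl⟩ p
    simp [Nat.factorization_pow]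
  · intro h
    refine ⟨n.factorization.prod fun p e => p ^ (e / k), ?_⟩
    conv_rhs => rw [← Nat.prod_factorization_pow_eq_self hn]
    rw [Finsupp.prod, Finsupp.prod, ← Finset.prod_pow]
    exact Finset.prod_congr rfl fun p _ => by rw [← pow_mul, Nat.div_mul_cancel (h p)]

theorem Nat.card_filter_exists_pow_eq_Icc {k : ℕ} (hk : k ≠ 0) (N : ℕ)
    [DecidablePred fun n : ℕ => ∃ m, m ^ k = n] :
    #{n ∈ Icc 1 N | ∃ m, m ^ k = n} = Nat.nthRoot k N := by
  have : {n ∈ Icc 1 N | ∃ m, m ^ k = n} = (Icc 1 (Nat.nthRoot k N)).image (· ^ k) := by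
    ext n
    simp only [mem_filter, mem_Icc, mem_image, Nat.le_nthRoot_iff hk]
    constructor
    · rintro ⟨⟨h1, hN⟩, m, rfl⟩
      exact ⟨m, ⟨Nat.pos_of_ne_zero (by rintro rfl; simp [hk] at h1), hN⟩, rfl⟩
    · rintro ⟨m, ⟨hm, hN⟩, rfl⟩
      exact ⟨⟨Nat.one_le_pow _ _ hm, hN⟩, m, rfl⟩
  rw [this, Finset.card_image_of_injective _ (Nat.pow_left_injective hk), Nat.card_Icc,
    Nat.add_sub_cancel]

theorem Nat.floor_rpow_inv_eq_nthRoot {x : ℝ} (hx : 0 ≤ x) {k : ℕ} (hk : k ≠ 0) :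
    ⌊x ^ ((k : ℝ)⁻¹)⌋₊ = Nat.nthRoot k ⌊x⌋₊ := by
  refine eq_of_forall_le_iff fun m => ?_
  rw [Nat.le_nthRoot_iff hk, Nat.le_floor_iff (Real.rpow_nonneg hx _), Nat.le_floor_iff hx,
    Real.le_rpow_inv_iff_of_pos (Nat.cast_nonneg m) hx (by positivity)]
  norm_cast

theorem ArithmeticFunction.IsMultiplicative.apply_eq_ite_exists_pow_eq {R : Type*}
    [CommMonoidWithZero R] {f : ArithmeticFunction R} (hf : f.IsMultiplicative) {k : ℕ}
    (hf_pow : ∀ p e, p.Prime → f (p ^ e) = if k ∣ e then 1 else 0) {n : ℕ} (hn : n ≠ 0) :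
    f n = if ∃ m, m ^ k = n then 1 else 0 := by
  classical
  rw [hf.multiplicative_factorization f hn, Finsupp.prod, Nat.support_factorization,
    Finset.prod_congr rfl fun p hp => hf_pow p _ (Nat.prime_of_mem_primeFactors hp),
    Finset.prod_boole]
  refine if_congr ?_ rfl rfl
  rw [Nat.exists_pow_eq_iff_forall_dvd_factorization hn]
  refine ⟨fun h p => ?_, fun h p _ => h p⟩
  by_cases hp : p ∈ n.primeFactors
  · exact h p hp
  · rw [← Nat.support_factorization, Finsupp.notMem_support_iff] at hp
    simp [hp]

theorem legendreSym_three_add_three (a : ℤ) : legendreSym 3 (a + 3) = legendreSym 3 a := by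
  rw [legendreSym.mod 3 (a + 3), legendreSym.mod 3 a]
  norm_num

theorem sum_range_legendreSym_three (k : ℕ) :
    ∑ j ∈ range (k + 1), legendreSym 3 ((j : ℤ) + 1) = if 3 ∣ k then 1 else 0 := by
  induction k using Nat.strong_induction_on with
  | _ k ih =>
    match k, ih with
    | 0, _ | 1, _ | 2, _ => decide
    | k + 3, ih =>
      have hperiod : ∑ j ∈ range 3, legendreSym 3 ((j : ℤ) + 1) = 0 := by decide
      have hshift (j : ℕ) :
          legendreSym 3 (((3 + j : ℕ) : ℤ) + 1) = legendreSym 3 ((j : ℤ) + 1) := by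
        rw [← legendreSym_three_add_three ((j : ℤ) + 1)]
        push_cast
        ring_nf
      rw [show k + 3 + 1 = 3 + (k + 1) by ring, sum_range_add, hperiod, zero_add]
      simp_rw [hshift, ih k (by omega), Nat.dvd_add_self_right]

/-- The function `λ_q` of the paper, `τ` being `σ 0`. -/
def legendreSymSigmaZero (q : ℕ) [Fact q.Prime] : ArithmeticFunction ℤ :=
  ⟨fun n => legendreSym q (σ 0 n), by simp⟩

theorem legendreSymSigmaZero_apply (q : ℕ) [Fact q.Prime] (n : ℕ) :
    legendreSymSigmaZero q n = legendreSym q (σ 0 n) := rfl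

theorem isMultiplicative_legendreSymSigmaZero (q : ℕ) [Fact q.Prime] :
    (legendreSymSigmaZero q).IsMultiplicative := by
  refine ⟨by simp [legendreSymSigmaZero_apply], fun {m n} hmn => ?_⟩
  simp only [legendreSymSigmaZero_apply, isMultiplicative_sigma.map_mul_of_coprime hmn,
    Nat.cast_mul, legendreSym.mul]

theorem legendreSymSigmaZero_prime_pow (q : ℕ) [Fact q.Prime] {p : ℕ} (hp : p.Prime) (e : ℕ) :
    legendreSymSigmaZero q (p ^ e) = legendreSym q ((e : ℤ) + 1) := by
  rw [legendreSymSigmaZero_apply, sigma_zero_apply_prime_pow hp]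
  push_cast
  rfl

theorem legendreSymSigmaZero_three_mul_zeta_apply {n : ℕ} (hn : n ≠ 0) :
    (legendreSymSigmaZero 3 * ζ) n = if ∃ m, m ^ (3 : ℕ) = n then 1 else 0 := by
  refine ((isMultiplicative_legendreSymSigmaZero 3).mul
    isMultiplicative_zeta.natCast).apply_eq_ite_exists_pow_eq (fun p e hp => ?_) hn
  rw [coe_mul_zeta_apply, Nat.sum_divisors_prime_pow hp]
  simp_rw [legendreSymSigmaZero_prime_pow 3 hp]
  exact sum_range_legendreSym_three e

theorem lam3_eq_legendreSymSigmaZero (n : ℕ) : lam3 n = legendreSymSigmaZero 3 n := by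
  rw [lam3, legendreSymSigmaZero_apply, sigma_zero_apply]

theorem sum_lam3_conv_one (x : ℝ) (hx : 1 ≤ x) :
    ∑ n ∈ Finset.Icc 1 ⌊x⌋₊, ∑ d ∈ n.divisors, lam3 d =
      (⌊x ^ ((1 : ℝ) / 3)⌋₊ : ℝ) := by
  have hcube (n : ℕ) (hn : n ∈ Icc 1 ⌊x⌋₊) :
      ∑ d ∈ n.divisors, lam3 d = if ∃ m, m ^ (3 : ℕ) = n then 1 else 0 := by
    have h := legendreSymSigmaZero_three_mul_zeta_apply (n := n) (by grind)
    rw [coe_mul_zeta_apply] at h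
    simp only [lam3_eq_legendreSymSigmaZero, ← Int.cast_sum, h]
    push_cast
    rfl
  rw [sum_congr rfl hcube, sum_boole, Nat.card_filter_exists_pow_eq_Icc three_ne_zero,
    ← Nat.floor_rpow_inv_eq_nthRoot (by linarith) three_ne_zero]
  norm_num
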